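/- Let G : ℝ × ℝ → ℝ be twice continuously differentiable in a neighbourhood of (x*, p*), with G(x*, p*) = 0 and ∂G/∂x (x*, p*) = 0. Assume ∂G/∂p (x*, p*) ≠ 0 and ∂²G/∂x² (x*, p*) > 0, and ∂G/∂p (x*, p*) < 0. Then there exist ε > 0 and δ > 0 such that for every p with p* < p < p* + δ, the two solutions x₁ < x₂ of G(x, p) = 0 in (x* − ε, x* + ε) are hyperbolic with ∂G/∂x (x₁, p) < 0 and ∂G/∂x (x₂, p) > 0; that is, the lower branch of stationary points of ẋ = G(x, p) is stable and the upper branch is unstable. -/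

import Mathlib

/-!
Since `∂²G/∂x²` is continuous and positive at `(xs, ps)`, every slice `x ↦ G (x, p)` with
`p` near `ps` is strictly convex on a fixed interval around `xs`. A strictly convex function
taking the same value at `x₁ < x₂` has derivative below the secant slope `0` at `x₁` and
above it at `x₂`.
-/

open Set Filter Topology Metric

section PartialFst

variable {𝕜 : Type*} [NontriviallyNormedField 𝕜] {E F : Type*} [NormedAddCommGroup E]
  [NormedSpace 𝕜 E] [NormedAddCommGroup F] [NormedSpace 𝕜 F]
  {f : 𝕜 × F → E} {q : 𝕜 × F}

noncomputable def partialFst (f : 𝕜 × F → E) (q : 𝕜 × F) : E := fderiv 𝕜 f q (1, 0)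

theorem DifferentiableAt.hasDerivAt_partialFst (hf : DifferentiableAt 𝕜 f q) :
    HasDerivAt (fun x => f (x, q.2)) (partialFst f q) q.1 :=
  hf.hasFDerivAt.comp_hasDerivAt q.1 ((hasDerivAt_id q.1).prodMk (hasDerivAt_const q.1 q.2))

theorem contDiffAt_partialFst {n : WithTop ℕ∞} (hf : ContDiffAt 𝕜 (n + 1) f q) :
    ContDiffAt 𝕜 n (partialFst f) q :=
  (ContinuousLinearMap.apply 𝕜 E ((1 : 𝕜), (0 : F))).contDiff.contDiffAt.comp q
    hf.fderiv_right_succ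

theorem ContDiffAt.deriv_deriv_slice (hf : ContDiffAt 𝕜 2 f q) :
    deriv (deriv fun x => f (x, q.2)) q.1 = partialFst (partialFst f) q := by
  have hslice : ∀ᶠ x in 𝓝 q.1, ContDiffAt 𝕜 2 f (x, q.2) :=
    (continuousAt_id.prodMk continuousAt_const).eventually (hf.eventually (by simp))
  have hderiv : deriv (fun x => f (x, q.2)) =ᶠ[𝓝 q.1] fun x => partialFst f (x, q.2) :=
    hslice.mono fun x hx => (hx.differentiableAt (by simp)).hasDerivAt_partialFst.deriv
  rw [hderiv.deriv_eq]
  exact ((contDiffAt_partialFst (n := 1) hf).differentiableAt one_ne_zero)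
    |>.hasDerivAt_partialFst.deriv

end PartialFst

theorem strictConvexOn_slice_of_partialFst_partialFst_pos {F : Type*} [NormedAddCommGroup F]
    [NormedSpace ℝ F] {G : ℝ × F → ℝ} {p : F} {S : Set ℝ} (hS : Convex ℝ S)
    (hG : ∀ x ∈ S, ContDiffAt ℝ 2 G (x, p) ∧ 0 < partialFst (partialFst G) (x, p)) :
    StrictConvexOn ℝ S fun x => G (x, p) := by
  refine strictConvexOn_of_deriv2_pos' hS (fun x hx => ?_) fun x hx => ?_
  · exact ((hG x hx).1.differentiableAt (by simp)).hasDerivAt_partialFst.continuousAt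
      |>.continuousWithinAt
  · simpa only [Function.iterate_succ, Function.iterate_zero, Function.comp_apply, id,
      (hG x hx).1.deriv_deriv_slice] using (hG x hx).2

theorem StrictConvexOn.deriv_neg_and_deriv_pos_of_eq {f : ℝ → ℝ} {S : Set ℝ} {x y : ℝ}
    (hf : StrictConvexOn ℝ S f) (hx : x ∈ S) (hy : y ∈ S) (hxy : x < y)
    (hfx : DifferentiableAt ℝ f x) (hfy : DifferentiableAt ℝ f y) (heq : f x = f y) :
    deriv f x < 0 ∧ 0 < deriv f y := by
  have hslope : slope f x y = 0 := by simp [slope_def_field, heq]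
  exact ⟨hslope ▸ hf.deriv_lt_slope hx hy hxy hfx, hslope ▸ hf.slope_lt_deriv hx hy hxy hfy⟩

theorem saddle_node_branch_stability_general
    (G : ℝ × ℝ → ℝ) (xs ps : ℝ)
    (hG : ContDiffAt ℝ 2 G (xs, ps))
    (hGxx : deriv (deriv (fun x => G (x, ps))) xs > 0) :
    ∃ ε > (0:ℝ), ∃ δ > (0:ℝ), ∀ p : ℝ, ps < p → p < ps + δ →
      ∀ x₁ x₂ : ℝ, x₁ ∈ Set.Ioo (xs - ε) (xs + ε) → x₂ ∈ Set.Ioo (xs - ε) (xs + ε) →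
        G (x₁, p) = 0 → G (x₂, p) = 0 → x₁ < x₂ →
        deriv (fun x => G (x, p)) x₁ < 0 ∧ deriv (fun x => G (x, p)) x₂ > 0 := by
  have hH : ContinuousAt (partialFst (partialFst G)) (xs, ps) :=
    (contDiffAt_partialFst (n := 0) (contDiffAt_partialFst (n := 1) hG)).continuousAt
  have hH0 : 0 < partialFst (partialFst G) (xs, ps) := hG.deriv_deriv_slice ▸ hGxx
  obtain ⟨r, hr, hball⟩ := eventually_nhds_iff_ball.mp
    ((hG.eventually (by simp)).and (hH.eventually (lt_mem_nhds hH0)))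
  refine ⟨r, hr, r, hr, fun p hp hp' x₁ x₂ hx₁ hx₂ hz₁ hz₂ hlt => ?_⟩
  have hslice : ∀ x ∈ Ioo (xs - r) (xs + r),
      ContDiffAt ℝ 2 G (x, p) ∧ 0 < partialFst (partialFst G) (x, p) := fun x hx =>
    hball (x, p) <| ball_prod_same xs ps r ▸
      ⟨(Real.ball_eq_Ioo xs r).symm ▸ hx, Real.ball_eq_Ioo ps r ▸ ⟨by linarith, hp'⟩⟩
  have hdiff : ∀ x ∈ Ioo (xs - r) (xs + r), DifferentiableAt ℝ (fun x => G (x, p)) x :=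
    fun x hx =>
      ((hslice x hx).1.differentiableAt (by simp)).hasDerivAt_partialFst.differentiableAt
  have hconvex := strictConvexOn_slice_of_partialFst_partialFst_pos (convex_Ioo _ _) hslice
  exact hconvex.deriv_neg_and_deriv_pos_of_eq hx₁ hx₂ hlt (hdiff x₁ hx₁) (hdiff x₂ hx₂)
    (hz₁.trans hz₂.symm)

/-- Saddle-node bifurcation theorem, stability of the branches (case
`G_xx > 0`, `G_p < 0`): for `p` slightly above `ps`, the two stationary points
`x₁ < x₂` near `xs` are hyperbolic, the lower one stable and the upper one
unstable. -/
theorem saddle_node_branch_stability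
    (G : ℝ × ℝ → ℝ) (xs ps : ℝ)
    (hG : ContDiffAt ℝ 2 G (xs, ps))
    (h0 : G (xs, ps) = 0)
    (hGx : deriv (fun x => G (x, ps)) xs = 0)
    (hGp : deriv (fun p => G (xs, p)) ps ≠ 0)
    (hGxx : deriv (deriv (fun x => G (x, ps))) xs > 0)
    (hGp' : deriv (fun p => G (xs, p)) ps < 0) :
    ∃ ε > (0:ℝ), ∃ δ > (0:ℝ), ∀ p : ℝ, ps < p → p < ps + δ →
      ∀ x₁ x₂ : ℝ, x₁ ∈ Set.Ioo (xs - ε) (xs + ε) → x₂ ∈ Set.Ioo (xs - ε) (xs + ε) →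
        G (x₁, p) = 0 → G (x₂, p) = 0 → x₁ < x₂ →
        deriv (fun x => G (x, p)) x₁ < 0 ∧ deriv (fun x => G (x, p)) x₂ > 0 :=
  saddle_node_branch_stability_general G xs ps hG hGxx
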